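/- Let C ⊆ ℝ³ be the closed polygon with the eight vertices P₁ = (4,0,0), P₂ = (3,3,-1), P₃ = (0,4,0), P₄ = (-3,3,1), P₅ = (-4,0,0), P₆ = (-3,-3,-1), P₇ = (0,-4,0), P₈ = (3,-3,1), taken cyclically. Then the double-point set of the projection π_y(x,y,z) = (x,z) restricted to C equals the single point {(0,0)}, and the only points of C projecting to (0,0) are P₃ = (0,4,0) and P₇ = (0,-4,0). -/

import Mathlib

open Set

noncomputable section

/-- Projection along the z-axis onto the x-y-plane. -/
def projZ : ℝ × ℝ × ℝ → ℝ × ℝ := fun p => (p.1, p.2.1)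

/-- Projection along the y-axis onto the x-z-plane. -/
def projY : ℝ × ℝ × ℝ → ℝ × ℝ := fun p => (p.1, p.2.2)

/-- Projection along the x-axis onto the y-z-plane. -/
def projX : ℝ × ℝ × ℝ → ℝ × ℝ := fun p => (p.2.1, p.2.2)

/-- Half rotation about the x-axis. -/
def rotX : ℝ × ℝ × ℝ → ℝ × ℝ × ℝ := fun p => (p.1, -p.2.1, -p.2.2)

/-- Half rotation about the y-axis. -/
def rotY : ℝ × ℝ × ℝ → ℝ × ℝ × ℝ := fun p => (-p.1, p.2.1, -p.2.2)

/-- Half rotation about the z-axis. -/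
def rotZ : ℝ × ℝ × ℝ → ℝ × ℝ × ℝ := fun p => (-p.1, -p.2.1, p.2.2)

/-- The double-point set of a projection `π` restricted to `C`. -/
def doublePoints (π : ℝ × ℝ × ℝ → ℝ × ℝ) (C : Set (ℝ × ℝ × ℝ)) : Set (ℝ × ℝ) :=
  {q | ∃ p₁ ∈ C, ∃ p₂ ∈ C, p₁ ≠ p₂ ∧ π p₁ = q ∧ π p₂ = q}

/-!
The half rotation `rotX` about the x-axis maps the octagon onto itself, exchanging the arc
P₁P₂P₃P₄P₅ (where y ≥ 0) with the complementary arc. The first arc is a graph over the x-axis,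
so two distinct points of the octagon with the same `projY`-image must be of the form `p` and
`rotX p`, which forces z = -z. The only points of the arc in the plane z = 0 are P₁, P₃, P₅,
and P₁, P₅ are fixed by `rotX`; what remains is the pair P₃, P₇ = rotX P₃ over (0, 0).
-/

def octagonVertex : Fin 8 → ℝ × ℝ × ℝ :=
  ![(4, 0, 0), (3, 3, -1), (0, 4, 0), (-3, 3, 1), (-4, 0, 0), (-3, -3, -1), (0, -4, 0), (3, -3, 1)]

def octagon : Set (ℝ × ℝ × ℝ) :=
  ⋃ i : Fin 8, segment ℝ (octagonVertex i) (octagonVertex (i + 1))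

def upperArc : Set (ℝ × ℝ × ℝ) :=
  segment ℝ (4, 0, 0) (3, 3, -1) ∪ segment ℝ (3, 3, -1) (0, 4, 0) ∪
    segment ℝ (0, 4, 0) (-3, 3, 1) ∪ segment ℝ (-3, 3, 1) (-4, 0, 0)

def rotXₗ : (ℝ × ℝ × ℝ) →ₗ[ℝ] ℝ × ℝ × ℝ := LinearMap.id.prodMap (-LinearMap.id)

lemma coe_rotXₗ : ⇑rotXₗ = rotX := rfl

lemma rotX_involutive : Function.Involutive rotX := fun p => by simp [rotX]

lemma projY_rotX (p : ℝ × ℝ × ℝ) : projY (rotX p) = (p.1, -p.2.2) := rfl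

lemma rotX_mem_segment {a b p : ℝ × ℝ × ℝ} (h : p ∈ segment ℝ a b) :
    rotX p ∈ segment ℝ (rotX a) (rotX b) := by
  rw [← coe_rotXₗ, ← LinearMap.coe_toAffineMap, ← image_segment]
  exact mem_image_of_mem _ h

lemma mem_upperArc_or_rotX_mem_upperArc {p : ℝ × ℝ × ℝ} (hp : p ∈ octagon) :
    p ∈ upperArc ∨ rotX p ∈ upperArc := by
  obtain ⟨i, hi⟩ := mem_iUnion.1 hp
  fin_cases i <;>
    simp only [octagonVertex, Fin.zero_eta, Fin.mk_one, Fin.reduceFinMk, Fin.isValue, Fin.reduceAdd,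
      Matrix.cons_val, Matrix.cons_val_zero, Matrix.cons_val_one, zero_add] at hi
  iterate 4 exact .inl (by simp [upperArc, hi])
  all_goals
    have h := rotX_mem_segment hi
    rw [segment_symm] at h
    exact .inr (by norm_num [upperArc, rotX] at h ⊢; simp [h])

lemma exists_param_of_mem_upperArc {p : ℝ × ℝ × ℝ} (hp : p ∈ upperArc) :
    ∃ t ∈ Icc (0 : ℝ) 1, p = (4 - t, 3 * t, -t) ∨ p = (3 - 3 * t, 3 + t, -1 + t) ∨
      p = (-3 * t, 4 - t, t) ∨ p = (-3 - t, 3 - 3 * t, 1 - t) := by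
  rcases hp with ((h | h) | h) | h <;> rw [segment_eq_image'] at h <;>
    obtain ⟨t, ht, rfl⟩ := h <;> refine ⟨t, ht, ?_⟩
  · exact .inl (by ext <;> simp <;> ring)
  · exact .inr <| .inl (by ext <;> simp <;> ring)
  · exact .inr <| .inr <| .inl (by ext <;> simp <;> ring)
  · exact .inr <| .inr <| .inr (by ext <;> simp <;> ring)

lemma upperArc_injOn_fst : InjOn Prod.fst upperArc := by
  intro p hp q hq hpq
  obtain ⟨s, ⟨hs₀, hs₁⟩, hp⟩ := exists_param_of_mem_upperArc hp
  obtain ⟨t, ⟨ht₀, ht₁⟩, hq⟩ := exists_param_of_mem_upperArc hq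
  rcases hp with rfl | rfl | rfl | rfl <;> rcases hq with rfl | rfl | rfl | rfl <;>
    simp only [Prod.mk.injEq] at hpq ⊢ <;>
    exact ⟨hpq, by linarith, by linarith⟩

lemma eq_of_mem_upperArc_of_z_eq_zero {p : ℝ × ℝ × ℝ} (hp : p ∈ upperArc) (hz : p.2.2 = 0) :
    p = (4, 0, 0) ∨ p = (0, 4, 0) ∨ p = (-4, 0, 0) := by
  obtain ⟨t, ⟨ht₀, ht₁⟩, hp⟩ := exists_param_of_mem_upperArc hp
  rcases hp with rfl | rfl | rfl | rfl <;> simp only [Prod.mk.injEq] at hz ⊢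
  · exact .inl ⟨by linarith, by linarith, by linarith⟩
  · exact .inr (.inl ⟨by linarith, by linarith, by linarith⟩)
  · exact .inr (.inl ⟨by linarith, by linarith, by linarith⟩)
  · exact .inr (.inr ⟨by linarith, by linarith, by linarith⟩)

lemma projY_eq_zero_of_mem_upperArc_of_rotX_mem_upperArc {p q : ℝ × ℝ × ℝ} (hp : p ∈ upperArc)
    (hq : rotX q ∈ upperArc) (hne : p ≠ q) (hpq : projY p = projY q) : projY p = (0, 0) := by
  have hx := congrArg Prod.fst hpq
  have hq' : q = rotX p := by rw [upperArc_injOn_fst hp hq hx, rotX_involutive]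
  have hz : p.2.2 = 0 := by
    have := congrArg Prod.snd hpq
    rw [hq', projY_rotX] at this
    simp only [projY] at this
    linarith
  rcases eq_of_mem_upperArc_of_z_eq_zero hp hz with rfl | rfl | rfl
  · exact absurd (hq'.trans (by simp [rotX])).symm hne
  · rfl
  · exact absurd (hq'.trans (by simp [rotX])).symm hne

lemma projY_eq_zero_of_mem_octagon {p q : ℝ × ℝ × ℝ} (hp : p ∈ octagon) (hq : q ∈ octagon)
    (hne : p ≠ q) (hpq : projY p = projY q) : projY p = (0, 0) := by
  have hx := congrArg Prod.fst hpq
  rcases mem_upperArc_or_rotX_mem_upperArc hp with hp | hp <;>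
    rcases mem_upperArc_or_rotX_mem_upperArc hq with hq | hq
  · exact absurd (upperArc_injOn_fst hp hq hx) hne
  · exact projY_eq_zero_of_mem_upperArc_of_rotX_mem_upperArc hp hq hne hpq
  · exact hpq ▸ projY_eq_zero_of_mem_upperArc_of_rotX_mem_upperArc hq hp hne.symm hpq.symm
  · exact absurd (rotX_involutive.injective (upperArc_injOn_fst hp hq hx)) hne

lemma eq_of_mem_upperArc_of_projY_eq_zero {p : ℝ × ℝ × ℝ} (hp : p ∈ upperArc)
    (h : projY p = (0, 0)) : p = (0, 4, 0) := by
  simp only [projY, Prod.mk.injEq] at h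
  rcases eq_of_mem_upperArc_of_z_eq_zero hp h.2 with rfl | rfl | rfl
  · norm_num at h
  · rfl
  · norm_num at h

lemma eq_of_mem_octagon_of_projY_eq_zero {p : ℝ × ℝ × ℝ} (hp : p ∈ octagon)
    (h : projY p = (0, 0)) : p = (0, 4, 0) ∨ p = (0, -4, 0) := by
  rcases mem_upperArc_or_rotX_mem_upperArc hp with hp | hp
  · exact .inl (eq_of_mem_upperArc_of_projY_eq_zero hp h)
  · have h' : projY (rotX p) = (0, 0) := by
      simp only [projY, Prod.mk.injEq] at h
      simp [projY_rotX, h]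
    refine .inr ?_
    rw [← rotX_involutive p, eq_of_mem_upperArc_of_projY_eq_zero hp h']
    norm_num [rotX]

lemma octagonVertex_mem_octagon (i : Fin 8) : octagonVertex i ∈ octagon :=
  mem_iUnion.2 ⟨i, left_mem_segment ℝ _ _⟩

theorem octagon_projY_double_points (V : Fin 8 → ℝ × ℝ × ℝ)
    (hV : V = ![(4, 0, 0), (3, 3, -1), (0, 4, 0), (-3, 3, 1),
                (-4, 0, 0), (-3, -3, -1), (0, -4, 0), (3, -3, 1)])
    (C : Set (ℝ × ℝ × ℝ))
    (hC : C = ⋃ i : Fin 8, segment ℝ (V i) (V (i + 1))) :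
    doublePoints projY C = {((0 : ℝ), (0 : ℝ))} ∧
    {p ∈ C | projY p = ((0 : ℝ), (0 : ℝ))} =
      {((0 : ℝ), (4 : ℝ), (0 : ℝ)), ((0 : ℝ), (-4 : ℝ), (0 : ℝ))} := by
  obtain rfl : C = octagon := by rw [hC, hV]; rfl
  have top : ((0 : ℝ), (4 : ℝ), (0 : ℝ)) ∈ octagon := octagonVertex_mem_octagon 2
  have bottom : ((0 : ℝ), (-4 : ℝ), (0 : ℝ)) ∈ octagon := octagonVertex_mem_octagon 6
  constructor
  · ext q
    constructor
    · rintro ⟨p, hp, p', hp', hne, rfl, hpq⟩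
      exact projY_eq_zero_of_mem_octagon hp hp' hne hpq.symm
    · rintro rfl
      exact ⟨_, top, _, bottom, by norm_num, rfl, rfl⟩
  · ext p
    constructor
    · exact fun ⟨hp, h⟩ => eq_of_mem_octagon_of_projY_eq_zero hp h
    · rintro (rfl | rfl)
      exacts [⟨top, rfl⟩, ⟨bottom, rfl⟩]
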